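/- arXiv:2312.05878 — 2 statements merged into one kernel-verified Lean document; each statement's English description precedes it below -/
import Mathlib

section
/- The function f(x) = 2·φ(x)·Φ(αx), where φ and Φ are the standard normal density and distribution function and α is any real number, is a probability density function on the real line (i.e., it is nonnegative and integrates to 1). -/
open MeasureTheory Real Filter Set

noncomputable def phi (x : ℝ) : ℝ := (Real.sqrt (2 * Real.pi))⁻¹ * Real.exp (-x ^ 2 / 2)

noncomputable def Phi (x : ℝ) : ℝ := ∫ t in Set.Iic x, phi t

lemma phi_eq : phi = ProbabilityTheory.gaussianPDFReal 0 1 := by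
  funext x
  simp [phi, ProbabilityTheory.gaussianPDFReal]

lemma phi_nonneg (x : ℝ) : 0 ≤ phi x := by
  rw [phi_eq]; exact ProbabilityTheory.gaussianPDFReal_nonneg 0 1 x

lemma phi_integrable : Integrable phi := by
  rw [phi_eq]; exact ProbabilityTheory.integrable_gaussianPDFReal 0 1

lemma phi_integral : ∫ x, phi x = 1 := by
  rw [phi_eq]; exact ProbabilityTheory.integral_gaussianPDFReal_eq_one 0 one_ne_zero

lemma phi_even (x : ℝ) : phi (-x) = phi x := by simp [phi]

lemma Phi_nonneg (x : ℝ) : 0 ≤ Phi x :=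
  integral_nonneg fun t => phi_nonneg t

lemma Phi_le_one (x : ℝ) : Phi x ≤ 1 := by
  rw [← phi_integral]
  exact setIntegral_le_integral phi_integrable (ae_of_all _ fun t => phi_nonneg t)

lemma Phi_add_Phi_neg (x : ℝ) : Phi x + Phi (-x) = 1 := by
  have h := _root_.integral_comp_neg_Ioi x phi
  simp only [phi_even] at h
  rw [Phi, Phi, ← h, intervalIntegral.integral_Iic_add_Ioi phi_integrable.integrableOn
    phi_integrable.integrableOn, phi_integral]

lemma Phi_measurable : Measurable Phi := by
  have : Monotone Phi := fun a b hab =>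
    setIntegral_mono_set phi_integrable.integrableOn
      (ae_of_all _ fun t => phi_nonneg t) (HasSubset.Subset.eventuallyLE (Iic_subset_Iic.2 hab))
  exact this.measurable

lemma int_phiPhi (α : ℝ) : Integrable (fun x => phi x * Phi (α * x)) := by
  refine Integrable.mono phi_integrable ?_ (ae_of_all _ fun x => ?_)
  · exact ((phi_eq ▸ ProbabilityTheory.measurable_gaussianPDFReal 0 1).mul
      (Phi_measurable.comp (measurable_const_mul α))).aestronglyMeasurable
  · rw [Real.norm_eq_abs, Real.norm_eq_abs, abs_of_nonneg (phi_nonneg x),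
      abs_of_nonneg (mul_nonneg (phi_nonneg x) (Phi_nonneg _))]
    nlinarith [phi_nonneg x, Phi_nonneg (α * x), Phi_le_one (α * x)]

theorem skew_normal_is_density (α : ℝ) :
    (∀ x : ℝ, 0 ≤ 2 * phi x * Phi (α * x)) ∧
    (∫ x : ℝ, 2 * phi x * Phi (α * x)) = 1 := by
  constructor
  · intro x
    have := phi_nonneg x
    have := Phi_nonneg (α * x)
    positivity
  · have hsym : (∫ x, phi x * Phi (α * x)) = ∫ x, phi x * Phi (-(α * x)) := by
      rw [← MeasureTheory.integral_neg_eq_self (fun x => phi x * Phi (α * x)) volume]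
      congr 1; funext x; rw [phi_even]; ring_nf
    have key : (∫ x, phi x * Phi (α * x)) + (∫ x, phi x * Phi (α * x)) = 1 := by
      nth_rewrite 2 [hsym]
      rw [← integral_add (int_phiPhi α)]
      · rw [← phi_integral]
        congr 1; funext x
        rw [← mul_add, Phi_add_Phi_neg, mul_one]
      · have := int_phiPhi (-α)
        simpa [neg_mul] using this
    calc (∫ x : ℝ, 2 * phi x * Phi (α * x))
        = ∫ x, phi x * Phi (α * x) + phi x * Phi (α * x) := by congr 1; funext x; ring
      _ = 1 := by rw [integral_add (int_phiPhi α) (int_phiPhi α)]; exact key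
end

section
/- Perturbation lemma: Let f₀ be a continuous probability density on ℝ symmetric about 0, let G be a one-dimensional cumulative distribution function whose derivative G' exists and is a density symmetric about 0, and let h : ℝ → ℝ be an odd function. Then f(x) = 2·f₀(x)·G(h(x)) is a probability density on ℝ. -/
/-!
Since `g = G'` is even, `G x + G (-x)` has zero derivative, and its limit at `+∞` shows it equals `1`.
Hence `G (h x) + G (h (-x)) = 1` for odd `h`, so the densities `f x` and `f (-x)` add up to
`2 f₀ x`; integrating and using that `x ↦ -x` preserves Lebesgue measure gives `2 ∫ f = 2`.
-/

open MeasureTheory Real Filter Set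

theorem add_comp_neg_eq_of_hasDerivAt_even {𝕜 E : Type*} [RCLike 𝕜] [NormedAddCommGroup E]
    [NormedSpace 𝕜 E] {G g : 𝕜 → E} (hG : ∀ x, HasDerivAt G (g x) x)
    (hg : ∀ x, g (-x) = g x) (x y : 𝕜) : G x + G (-x) = G y + G (-y) := by
  have hderiv : ∀ x, HasDerivAt (fun x => G x + G (-x)) 0 x := fun x => by
    have := (hG x).add ((hG (-x)).scomp x (hasDerivAt_neg x))
    rwa [hg, neg_one_smul, add_neg_cancel] at this
  exact is_const_of_deriv_eq_zero (fun x => (hderiv x).differentiableAt)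
    (fun x => (hderiv x).deriv) x y

theorem add_comp_neg_eq_one_of_hasDerivAt_even {G g : ℝ → ℝ} (hG : ∀ x, HasDerivAt G (g x) x)
    (hg : ∀ x, g (-x) = g x) (hG_bot : Tendsto G atBot (nhds 0))
    (hG_top : Tendsto G atTop (nhds 1)) (x : ℝ) : G x + G (-x) = 1 := by
  have hlim : Tendsto (fun y => G y + G (-y)) atTop (nhds 1) := by
    simpa using hG_top.add (hG_bot.comp tendsto_neg_atTop_atBot)
  refine tendsto_nhds_unique (tendsto_const_nhds.congr fun y => ?_) hlim
  exact add_comp_neg_eq_of_hasDerivAt_even hG hg x y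

theorem two_mul_integral_mul_eq_integral_of_add_comp_neg_eq_one {α : Type*} [MeasurableSpace α]
    [AddGroup α] [MeasurableNeg α] {μ : Measure α} [μ.IsNegInvariant] {f w : α → ℝ} {C : ℝ}
    (hf : Integrable f μ) (hf_even : ∀ x, f (-x) = f x) (hw_meas : AEStronglyMeasurable w μ)
    (hw_bdd : ∀ᵐ x ∂μ, ‖w x‖ ≤ C) (hw : ∀ x, w x + w (-x) = 1) :
    2 * ∫ x, f x * w x ∂μ = ∫ x, f x ∂μ := by
  have hfw : Integrable (fun x => f x * w x) μ := by
    simpa only [mul_comm] using hf.bdd_mul hw_meas hw_bdd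
  calc 2 * ∫ x, f x * w x ∂μ
      = (∫ x, f x * w x ∂μ) + ∫ x, f (-x) * w (-x) ∂μ := by
        rw [integral_neg_eq_self (fun x => f x * w x) μ, two_mul]
    _ = ∫ x, (f x * w x + f (-x) * w (-x)) ∂μ := (integral_add hfw hfw.comp_neg).symm
    _ = ∫ x, f x ∂μ := by
        congr 1 with x
        rw [hf_even, ← mul_add, hw, mul_one]

theorem perturbation_lemma_general (f₀ G g h : ℝ → ℝ)
    (hf₀_nonneg : ∀ x, 0 ≤ f₀ x)
    (hf₀_int : (∫ x : ℝ, f₀ x) = 1)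
    (hf₀_symm : ∀ x, f₀ (-x) = f₀ x)
    (hG_deriv : ∀ x, HasDerivAt G (g x) x)
    (hg_nonneg : ∀ x, 0 ≤ g x)
    (hg_symm : ∀ x, g (-x) = g x)
    (hG_bot : Tendsto G atBot (nhds 0))
    (hG_top : Tendsto G atTop (nhds 1))
    (hh_odd : ∀ x, h (-x) = -h x)
    (hh_meas : Measurable h) :
    (∀ x : ℝ, 0 ≤ 2 * f₀ x * G (h x)) ∧
    (∫ x : ℝ, 2 * f₀ x * G (h x)) = 1 := by
  have hG_mono : Monotone G := monotone_of_hasDerivAt_nonneg hG_deriv hg_nonneg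
  have hG_nonneg : ∀ x, 0 ≤ G x := hG_mono.le_of_tendsto hG_bot
  have hG_le_one : ∀ x, G x ≤ 1 := hG_mono.ge_of_tendsto hG_top
  have hf₀_integrable : Integrable f₀ := Integrable.of_integral_ne_zero (by simp [hf₀_int])
  refine ⟨fun x => mul_nonneg (mul_nonneg zero_le_two (hf₀_nonneg x)) (hG_nonneg (h x)), ?_⟩
  calc (∫ x : ℝ, 2 * f₀ x * G (h x))
      = 2 * ∫ x : ℝ, f₀ x * G (h x) := by simp_rw [mul_assoc]; exact integral_const_mul _ _
    _ = ∫ x : ℝ, f₀ x := by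
        refine two_mul_integral_mul_eq_integral_of_add_comp_neg_eq_one (C := 1) hf₀_integrable
          hf₀_symm (hG_mono.measurable.comp hh_meas).aestronglyMeasurable
          (ae_of_all _ fun x => ?_) fun x => ?_
        · rw [norm_eq_abs, abs_le]
          exact ⟨by linarith [hG_nonneg (h x)], hG_le_one (h x)⟩
        · rw [hh_odd]
          exact add_comp_neg_eq_one_of_hasDerivAt_even hG_deriv hg_symm hG_bot hG_top (h x)
    _ = 1 := hf₀_int

theorem perturbation_lemma (f₀ G g h : ℝ → ℝ)
    (hf₀_cont : Continuous f₀) (hf₀_nonneg : ∀ x, 0 ≤ f₀ x)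
    (hf₀_int : (∫ x : ℝ, f₀ x) = 1)
    (hf₀_symm : ∀ x, f₀ (-x) = f₀ x)
    (hG_deriv : ∀ x, HasDerivAt G (g x) x)
    (hg_nonneg : ∀ x, 0 ≤ g x)
    (hg_int : (∫ x : ℝ, g x) = 1)
    (hg_symm : ∀ x, g (-x) = g x)
    (hG_bot : Tendsto G atBot (nhds 0))
    (hG_top : Tendsto G atTop (nhds 1))
    (hh_odd : ∀ x, h (-x) = -h x)
    (hh_meas : Measurable h) :
    (∀ x : ℝ, 0 ≤ 2 * f₀ x * G (h x)) ∧
    (∫ x : ℝ, 2 * f₀ x * G (h x)) = 1 :=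
  perturbation_lemma_general f₀ G g h hf₀_nonneg hf₀_int hf₀_symm hG_deriv hg_nonneg hg_symm hG_bot
    hG_top hh_odd hh_meas
end
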